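/- arXiv:1003.5736 — 2 statements merged into one kernel-verified Lean document; each statement's English description precedes it below -/
import Mathlib

section
/- Let (X,L) be a quasi-polarized manifold of dimension n, i.e., X a smooth projective variety and L a nef and big line bundle. For 0 ≤ i ≤ n-1 the i-th sectional geometric genus satisfies g_i(X,L) = Σ_{j=0}^{n-i-1} (-1)^j·C(n-i, j)·h^0(K_X + (n-i-j)L) + Σ_{k=0}^{n-i} (-1)^{n-i-k}·h^{n-k}(O_X). -/
/-!
Evaluating the binomial expansion of `χ(tL)` at `t = -k` gives
`χ(-kL) = ∑_j (-1)^j χ_j C(k, j)`, so binomial inversion (the `m`-th forward difference at `0`)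
recovers `(-1)^m χ_m` as the alternating sum `∑_{k ≤ m} (-1)^(m-k) C(m, k) χ(-kL)`.
For `k ≥ 1`, Serre duality and Kawamata–Viehweg vanishing turn `χ(-kL)` into
`(-1)^n h^0(K_X + kL)`, while the `k = 0` term is `χ(𝒪_X)`, which is what `g_i` subtracts.
-/

/-- `C(t+j-1, j)` as a rational-valued function of an integer `t`
(the binomial basis polynomial used in the expansion of `χ(tL)`). -/
def ascBinom (t : ℤ) (j : ℕ) : ℚ :=
  (∏ i ∈ Finset.range j, ((t : ℚ) + i)) / (Nat.factorial j : ℚ)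

/-- Abstract invariants of a quasi-polarized manifold `(X, L)` of dimension `n`:
`X` a smooth complex projective variety and `L` a nef and big line bundle on `X`.
The fields record the standard cohomological invariants together with the
standard relations among them (binomial expansion of `χ(tL)`,
Kawamata–Viehweg vanishing plus Serre duality, connectedness). -/
structure QPolarized (n : ℕ) where
  /-- `h^q(X, 𝒪_X)` -/
  hq : ℕ → ℕ
  /-- `h^0(X, K_X + t L)`; in particular `h0adj 0 = h^0(K_X)` -/
  h0adj : ℕ → ℕ
  /-- the Euler–Poincaré characteristic `t ↦ χ(X, tL)` -/
  chi : ℤ → ℚ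
  /-- the coefficients `χ_j(X, L)` of `χ(tL)` in the binomial basis `C(t+j-1, j)` -/
  c : ℕ → ℚ
  /-- the degree `L^n` -/
  Ln : ℤ
  /-- the Kodaira dimension `κ(X)`, where `⊥` denotes `-∞` -/
  kappa : WithBot ℤ
  /-- the Iitaka–Kodaira dimension `κ(K_X + m L)`, where `⊥` denotes `-∞` -/
  kappaAdj : ℕ → WithBot ℤ
  /-- the dimension of the image of the Albanese map of `X` -/
  albImageDim : ℕ
  /-- the predicate "there exists a birational morphism `f : X → ℙ^n` such that
  `L = f^*(𝒪_{ℙ^n}(1))`" -/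
  birationalToProjSpace : Prop
  /-- `χ(tL) = ∑_{j=0}^n χ_j(X,L) · C(t+j-1, j)` for all integers `t` -/
  expansion : ∀ t : ℤ, chi t = ∑ j ∈ Finset.range (n + 1), c j * ascBinom t j
  /-- `χ(𝒪_X) = ∑_{q=0}^n (-1)^q h^q(𝒪_X)` -/
  chi_zero : chi 0 = ∑ q ∈ Finset.range (n + 1), (-1 : ℚ) ^ q * (hq q : ℚ)
  /-- Serre duality and Kawamata–Viehweg vanishing:
  `χ(-mL) = (-1)^n h^0(K_X + mL)` for every `m ≥ 1` -/
  serre : ∀ m : ℕ, 1 ≤ m → chi (-(m : ℤ)) = (-1 : ℚ) ^ n * (h0adj m : ℚ)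
  /-- the top binomial coefficient of `χ(tL)` is the degree `L^n` -/
  c_top : c n = (Ln : ℚ)
  /-- `X` is connected: `h^0(𝒪_X) = 1` -/
  h0_one : hq 0 = 1
  /-- Serre duality: `h^n(𝒪_X) = h^0(K_X)` -/
  serre_top : hq n = h0adj 0

namespace QPolarized

variable {n : ℕ}

/-- the `i`-th sectional geometric genus
`g_i(X,L) = (-1)^i (χ_{n-i}(X,L) - χ(𝒪_X)) + ∑_{j=0}^{n-i} (-1)^{n-i-j} h^{n-j}(𝒪_X)` -/
def g (X : QPolarized n) (i : ℕ) : ℚ :=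
  (-1 : ℚ) ^ i * (X.c (n - i) - X.chi 0)
    + ∑ j ∈ Finset.range (n - i + 1), (-1 : ℚ) ^ (n - i - j) * (X.hq (n - j) : ℚ)

/-- the iterated finite differences `F_i(t)` of `F_0 : t ↦ h^0(K_X + tL)`:
`F_i(t) = F_{i-1}(t+1) - F_{i-1}(t)` -/
def Fdiff (X : QPolarized n) : ℕ → ℕ → ℤ
  | 0 => fun t => (X.h0adj t : ℤ)
  | (i + 1) => fun t => X.Fdiff i (t + 1) - X.Fdiff i t

/-- the `i`-th Hilbert coefficient `A_i(X,L) = F_{n-i}(1)` -/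
def A (X : QPolarized n) (i : ℕ) : ℤ := X.Fdiff (n - i) 1

end QPolarized

open Finset

lemma ascBinom_neg_natCast (k j : ℕ) :
    ascBinom (-(k : ℤ)) j = (-1) ^ j * (k.choose j : ℚ) := by
  have hprod : ∏ i ∈ range j, (((-k : ℤ) : ℚ) + i) = (-1) ^ j * (k.descFactorial j : ℚ) := by
    have hterm (i : ℕ) : ((-k : ℤ) : ℚ) + i = -1 * ((k : ℚ) - i) := by push_cast; ring
    rw [prod_congr rfl fun i _ ↦ hterm i, prod_mul_distrib, prod_const, card_range,
      ← descPochhammer_eval_eq_prod_range, descPochhammer_eval_eq_descFactorial]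
  rw [ascBinom, hprod, Nat.descFactorial_eq_factorial_mul_choose, Nat.cast_mul,
    mul_div_assoc, mul_div_cancel_left₀ _ (Nat.cast_ne_zero.mpr j.factorial_ne_zero)]

lemma fwdDiff_iter_sum_choose_smul_zero {G : Type*} [AddCommGroup G] (s : Finset ℕ)
    (a : ℕ → G) (m : ℕ) :
    (fwdDiff 1)^[m] (fun x : ℕ ↦ ∑ j ∈ s, (x.choose j : ℤ) • a j) 0 = if m ∈ s then a m else 0 := by
  have hsmul (j : ℕ) : (fwdDiff 1)^[m] (fun x : ℕ ↦ (x.choose j : ℤ) • a j) 0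
      = (fwdDiff 1)^[m] (fun x : ℕ ↦ (x.choose j : ℤ)) 0 • a j := by
    simp only [fwdDiff_iter_eq_sum_shift, sum_smul, smul_smul, smul_eq_mul]
  rw [show (fun x : ℕ ↦ ∑ j ∈ s, (x.choose j : ℤ) • a j)
      = ∑ j ∈ s, fun x : ℕ ↦ (x.choose j : ℤ) • a j from by ext; simp,
    fwdDiff_iter_finsetSum, Finset.sum_apply]
  simp only [hsmul, fwdDiff_iter_choose_zero, ite_smul, one_smul, zero_smul, sum_ite_eq]

theorem binomial_inversion {G : Type*} [AddCommGroup G] {f a : ℕ → G} {s : Finset ℕ}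
    (hf : ∀ x, f x = ∑ j ∈ s, (x.choose j : ℤ) • a j) {m : ℕ} (hm : m ∈ s) :
    ∑ k ∈ range (m + 1), ((-1 : ℤ) ^ (m - k) * m.choose k) • f k = a m := by
  have := fwdDiff_iter_sum_choose_smul_zero s a m
  rw [← funext hf, if_pos hm, fwdDiff_iter_eq_sum_shift] at this
  simpa only [zero_add, smul_eq_mul, mul_one] using this

namespace QPolarized

variable {n : ℕ} (X : QPolarized n)

lemma chi_neg_natCast (k : ℕ) :
    X.chi (-k) = ∑ j ∈ range (n + 1), (k.choose j : ℤ) • ((-1) ^ j * X.c j) := by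
  simp only [X.expansion, ascBinom_neg_natCast, zsmul_eq_mul, Int.cast_natCast]
  exact sum_congr rfl fun j _ ↦ by ring

lemma neg_one_pow_mul_c_sub_chi_zero {i : ℕ} (hi : i ≤ n) :
    (-1) ^ i * (X.c (n - i) - X.chi 0)
      = ∑ j ∈ range (n - i), (-1) ^ j * ((n - i).choose j : ℚ) * X.h0adj (n - i - j) := by
  set m := n - i
  have hinv : (-1) ^ m * X.c m
      = (-1) ^ n * ∑ j ∈ range m, (-1) ^ j * (m.choose j : ℚ) * X.h0adj (m - j)
        + (-1) ^ m * X.chi 0 := by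
    rw [← binomial_inversion X.chi_neg_natCast (mem_range.2 (by omega)), ← sum_range_reflect,
      sum_range_succ, mul_sum]
    congr 1
    · refine sum_congr rfl fun j hj ↦ ?_
      have hj : j < m := mem_range.1 hj
      rw [show m + 1 - 1 - j = m - j by omega, X.serre (m - j) (by omega),
        show m - (m - j) = j by omega, Nat.choose_symm hj.le, zsmul_eq_mul]
      push_cast
      ring
    · simp
  have hsign : (-1 : ℚ) ^ i = (-1) ^ n * (-1) ^ m := by
    rw [← pow_add, show n + m = i + 2 * m by omega, pow_add, pow_mul]
    norm_num
  have hsq : (-1 : ℚ) ^ n * (-1) ^ n = 1 := by rw [← mul_pow]; norm_num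
  linear_combination (X.c m - X.chi 0) * hsign + (-1) ^ n * hinv
    + (∑ j ∈ range m, (-1) ^ j * (m.choose j : ℚ) * X.h0adj (m - j)) * hsq

end QPolarized

/-- For a quasi-polarized manifold `(X,L)` of dimension `n` and
`0 ≤ i ≤ n-1`,
`g_i(X,L) = ∑_{j=0}^{n-i-1} (-1)^j C(n-i,j) h^0(K_X+(n-i-j)L)
  + ∑_{k=0}^{n-i} (-1)^{n-i-k} h^{n-k}(𝒪_X)`. -/
theorem sectional_genus_formula (n : ℕ) (X : QPolarized n) (i : ℕ) (hi : i + 1 ≤ n) :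
    X.g i = ∑ j ∈ Finset.range (n - i),
        (-1 : ℚ) ^ j * (Nat.choose (n - i) j : ℚ) * (X.h0adj (n - i - j) : ℚ)
      + ∑ k ∈ Finset.range (n - i + 1), (-1 : ℚ) ^ (n - i - k) * (X.hq (n - k) : ℚ) := by
  rw [QPolarized.g, X.neg_one_pow_mul_c_sub_chi_zero (by omega)]
end

section
/- Let (X,L) be a quasi-polarized manifold of dimension 3 with h^0(K_X) = 0. Then the second sectional geometric genus satisfies g_2(X,L) = h^0(K_X + L) + h^2(O_X); in particular g_2(X,L) ≥ h^2(O_X) ≥ 0. -/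
theorem ascBinom_zero_right (t : ℤ) : ascBinom t 0 = 1 := by
  simp [ascBinom]

theorem ascBinom_neg_natCast_of_lt {m j : ℕ} (hmj : m < j) : ascBinom (-(m : ℤ)) j = 0 := by
  rw [ascBinom, Finset.prod_eq_zero (Finset.mem_range.mpr hmj) (by push_cast; ring), zero_div]

theorem ascBinom_neg_one_one : ascBinom (-1) 1 = -1 := by
  simp [ascBinom]

namespace QPolarized

variable {n : ℕ} (X : QPolarized n)

theorem chi_zero_eq_c_zero : X.chi 0 = X.c 0 := by
  rw [X.expansion 0, Finset.sum_eq_single 0]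
  · rw [ascBinom_zero_right, mul_one]
  · intro j _ hj
    simpa using Or.inr (ascBinom_neg_natCast_of_lt (m := 0) (Nat.pos_of_ne_zero hj))
  · simp

theorem chi_neg_one (hn : 1 ≤ n) : X.chi (-1) = X.c 0 - X.c 1 := by
  obtain ⟨k, rfl⟩ := Nat.exists_eq_add_of_le' hn
  have hvanish : ∀ i ∈ Finset.range k, X.c (i + 2) * ascBinom (-1) (i + 2) = 0 := fun i _ => by
    simpa using Or.inr (ascBinom_neg_natCast_of_lt (m := 1) (j := i + 2) (by omega))
  rw [X.expansion (-1), Finset.sum_range_succ', Finset.sum_range_succ', Finset.sum_eq_zero hvanish,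
    ascBinom_neg_one_one, ascBinom_zero_right]
  ring

theorem c_one_sub_chi_zero (hn : 1 ≤ n) :
    X.c 1 - X.chi 0 = -(-1 : ℚ) ^ n * X.h0adj 1 := by
  have hserre := X.serre 1 le_rfl
  rw [Nat.cast_one, X.chi_neg_one hn] at hserre
  rw [X.chi_zero_eq_c_zero]
  linarith

theorem g_dim_sub_one (hn : 1 ≤ n) :
    X.g (n - 1) = X.h0adj 1 + X.hq (n - 1) - X.h0adj 0 := by
  have hsign : (-1 : ℚ) ^ (n - 1) * -(-1) ^ n = 1 := by
    rw [mul_neg, ← pow_add, show n - 1 + n = 2 * (n - 1) + 1 by omega, pow_succ, pow_mul]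
    norm_num
  rw [g, show n - (n - 1) = 1 by omega, X.c_one_sub_chi_zero hn, ← mul_assoc, hsign,
    Finset.sum_range_succ, Finset.sum_range_one]
  simp only [tsub_zero, tsub_self, X.serre_top]
  ring

end QPolarized

/-- For a quasi-polarized manifold `(X,L)` of dimension `3` with
`h^0(K_X) = 0`, the second sectional geometric genus satisfies
`g_2(X,L) = h^0(K_X + L) + h^2(𝒪_X)`; in particular
`g_2(X,L) ≥ h^2(𝒪_X) ≥ 0`. -/
theorem g2_formula_dim3 (X : QPolarized 3) (h : X.h0adj 0 = 0) :
    X.g 2 = (X.h0adj 1 : ℚ) + (X.hq 2 : ℚ) ∧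
      (X.hq 2 : ℚ) ≤ X.g 2 ∧ (0 : ℚ) ≤ X.g 2 := by
  have hg : X.g 2 = X.h0adj 1 + X.hq 2 := by
    simpa [h] using X.g_dim_sub_one (by norm_num)
  have h0adj_nonneg : (0 : ℚ) ≤ X.h0adj 1 := Nat.cast_nonneg _
  have hq_nonneg : (0 : ℚ) ≤ X.hq 2 := Nat.cast_nonneg _
  exact ⟨hg, by linarith, by linarith⟩
end
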